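/- Universal approximation theorem for hypercomplex-valued MLP networks: Let n, N ≥ 1, let V = ℝⁿ with its standard basis, and let μ : V × V → V be an ℝ-bilinear multiplication such that (i) for every k ∈ {0,…,n−1} the coordinate bilinear form B_k(x,y) = (μ(x,y))_k is non-degenerate, and (ii) there exists a two-sided identity 1_V ∈ V with μ(1_V, x) = x = μ(x, 1_V) for all x ∈ V. Let ψ : ℝ → ℝ be a Tauber–Wiener function such that ψ(t) → 0 as t → −∞ or ψ(t) → 0 as t → +∞, and let Ψ : V → V be the split activation (Ψ(x))_k = ψ(x_k). Then for every compact set K ⊆ Vᴺ, every continuous function f : Vᴺ → V, and every ε > 0, there exist M ∈ ℕ, output weights α₁,…,α_M ∈ V, weights w_{ij} ∈ V (1 ≤ i ≤ M, 1 ≤ j ≤ N), and biases b₁,…,b_M ∈ V such that ‖ Σ_{i=1}^M μ( α_i, Ψ( Σ_{j=1}^N μ(w_{ij}, x_j) + b_i ) ) − f(x) ‖ ≤ ε for all x = (x₁,…,x_N) ∈ K. -/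

import Mathlib

/-!
The real ridge networks `x ↦ ∑ cᵢ ψ (ℓᵢ x + θᵢ)` are uniformly dense on compact sets. Indeed, the
span of the exponential ridges `exp (ℓ x + θ)` is an algebra (`exp` turns sums into products) that
separates points (Hahn–Banach), hence is dense by Stone–Weierstrass, and on the bounded range of
`ℓ x + θ` each exponential ridge is uniformly approximated by a `ψ`-network (Tauber–Wiener).

A ridge function times the basis vector `e_k` is, up to `ε`, a single hypercomplex neuron:
non-degeneracy of `B_k` gives weights whose combination has `k`-th coordinate `ℓ x`, the identity
is the output weight, and the bias moves all other coordinates to where `ψ` is negligible. Summing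
over `k` approximates `f`.
-/

open Filter

/-- `ψ` is a Tauber–Wiener function: every continuous real function can be uniformly
approximated on every closed interval by finite linear combinations of the form
`t ↦ ∑ i, α i * ψ (w i * t + θ i)`. -/
def IsTauberWiener (ψ : ℝ → ℝ) : Prop :=
  ∀ f : ℝ → ℝ, Continuous f → ∀ a b : ℝ, ∀ ε : ℝ, 0 < ε →
    ∃ M : ℕ, ∃ α w θ : Fin M → ℝ,
      ∀ t ∈ Set.Icc a b, |f t - ∑ i, α i * ψ (w i * t + θ i)| ≤ ε

open Topology Submodule

namespace Submodule

variable {X E F : Type*} [NormedAddCommGroup E] [NormedSpace ℝ E]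
  [NormedAddCommGroup F] [NormedSpace ℝ F]

def uniformClosureOn (S : Submodule ℝ (X → E)) (K : Set X) : Submodule ℝ (X → E) where
  carrier := {g | ∀ ε > 0, ∃ h ∈ S, ∀ x ∈ K, ‖h x - g x‖ ≤ ε}
  zero_mem' ε hε := ⟨0, S.zero_mem, fun x _ => by simpa using hε.le⟩
  add_mem' {g₁ g₂} hg₁ hg₂ ε hε := by
    obtain ⟨h₁, hh₁, h₁g₁⟩ := hg₁ (ε / 2) (half_pos hε)
    obtain ⟨h₂, hh₂, h₂g₂⟩ := hg₂ (ε / 2) (half_pos hε)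
    refine ⟨h₁ + h₂, S.add_mem hh₁ hh₂, fun x hx => ?_⟩
    calc ‖(h₁ + h₂) x - (g₁ + g₂) x‖ = ‖(h₁ x - g₁ x) + (h₂ x - g₂ x)‖ := by
          rw [Pi.add_apply, Pi.add_apply, add_sub_add_comm]
      _ ≤ ε / 2 + ε / 2 := (norm_add_le _ _).trans (add_le_add (h₁g₁ x hx) (h₂g₂ x hx))
      _ = ε := add_halves ε
  smul_mem' c g hg ε hε := by
    obtain ⟨h, hh, hg⟩ := hg (ε / (‖c‖ + 1)) (by positivity)
    refine ⟨c • h, S.smul_mem c hh, fun x hx => ?_⟩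
    calc ‖(c • h) x - (c • g) x‖ = ‖c‖ * ‖h x - g x‖ := by
          rw [Pi.smul_apply, Pi.smul_apply, ← smul_sub, norm_smul]
      _ ≤ (‖c‖ + 1) * (ε / (‖c‖ + 1)) := by
          gcongr; exacts [le_add_of_nonneg_right zero_le_one, hg x hx]
      _ = ε := mul_div_cancel₀ _ (by positivity)

variable {S T : Submodule ℝ (X → E)} {K : Set X}

theorem uniformClosureOn_le_of_le (hTS : T ≤ S.uniformClosureOn K) :
    T.uniformClosureOn K ≤ S.uniformClosureOn K := by
  intro g hg ε hε
  obtain ⟨h, hT, hhg⟩ := hg (ε / 2) (half_pos hε)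
  obtain ⟨h', hS, hh'h⟩ := hTS hT (ε / 2) (half_pos hε)
  refine ⟨h', hS, fun x hx => ?_⟩
  calc ‖h' x - g x‖ ≤ ‖h' x - h x‖ + ‖h x - g x‖ := norm_sub_le_norm_sub_add_norm_sub _ _ _
    _ ≤ ε / 2 + ε / 2 := add_le_add (hh'h x hx) (hhg x hx)
    _ = ε := add_halves ε

theorem comp_mem_uniformClosureOn_map (φ : E →L[ℝ] F) {g : X → E}
    (hg : g ∈ S.uniformClosureOn K) :
    φ ∘ g ∈ (S.map ((φ : E →ₗ[ℝ] F).compLeft X)).uniformClosureOn K := by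
  intro ε hε
  obtain ⟨h, hh, hhg⟩ := hg (ε / (‖φ‖ + 1)) (by positivity)
  refine ⟨φ ∘ h, mem_map_of_mem hh, fun x hx => ?_⟩
  calc ‖φ (h x) - φ (g x)‖ ≤ ‖φ‖ * ‖h x - g x‖ := by rw [← map_sub]; exact φ.le_opNorm _
    _ ≤ (‖φ‖ + 1) * (ε / (‖φ‖ + 1)) := by
        gcongr; exacts [le_add_of_nonneg_right zero_le_one, hhg x hx]
    _ = ε := mul_div_cancel₀ _ (by positivity)

end Submodule

section RidgeFunctions

variable {X : Type*} [NormedAddCommGroup X] [NormedSpace ℝ X]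

def ridgeFunctions (σ : ℝ → ℝ) : Set (X → ℝ) :=
  {g | ∃ (ℓ : X →L[ℝ] ℝ) (θ : ℝ), g = fun x => σ (ℓ x + θ)}

theorem mul_mem_ridgeFunctions_exp {g h : X → ℝ} (hg : g ∈ ridgeFunctions Real.exp)
    (hh : h ∈ ridgeFunctions Real.exp) : g * h ∈ ridgeFunctions Real.exp := by
  obtain ⟨ℓ, θ, rfl⟩ := hg
  obtain ⟨ℓ', θ', rfl⟩ := hh
  refine ⟨ℓ + ℓ', θ + θ', funext fun x => ?_⟩
  simp only [Pi.mul_apply, add_apply, ← Real.exp_add]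
  ring_nf

def expRidgeSubalgebra : Subalgebra ℝ (X → ℝ) :=
  (span ℝ (ridgeFunctions Real.exp)).toSubalgebra
    (subset_span ⟨0, 0, funext fun x => by simp⟩)
    fun g h hg hh => by
      have hgh := mul_mem_mul hg hh
      rw [span_mul_span] at hgh
      refine span_mono ?_ hgh
      rintro _ ⟨g, hg, h, hh, rfl⟩
      exact mul_mem_ridgeFunctions_exp hg hh

theorem mem_uniformClosureOn_span_ridgeFunctions_exp {K : Set X} (hK : IsCompact K)
    {g : X → ℝ} (hg : Continuous g) :
    g ∈ (span ℝ (ridgeFunctions Real.exp)).uniformClosureOn K := by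
  let A : Subalgebra ℝ C(X, ℝ) := expRidgeSubalgebra.comap (ContinuousMap.coeFnAlgHom ℝ)
  have hA : A.SeparatesPoints := by
    intro x y hxy
    obtain ⟨ℓ, hℓ⟩ := SeparatingDual.exists_separating_of_ne (R := ℝ) hxy
    have hexpℓ : (fun z => Real.exp (ℓ z)) ∈ ridgeFunctions Real.exp :=
      ⟨ℓ, 0, funext fun z => by simp⟩
    exact ⟨_, ⟨⟨fun z => Real.exp (ℓ z), by fun_prop⟩, subset_span hexpℓ, rfl⟩, by simpa using hℓ⟩
  intro ε hε
  obtain ⟨h, hA, hhg⟩ :=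
    ContinuousMap.exists_mem_subalgebra_near_continuous_of_isCompact_of_separatesPoints
      hA ⟨g, hg⟩ hK hε
  exact ⟨h, hA, fun x hx => (hhg x hx).le⟩

theorem comp_mem_uniformClosureOn_span_ridgeFunctions {ψ : ℝ → ℝ} (hTW : IsTauberWiener ψ)
    {K : Set X} (hK : IsCompact K) {σ : ℝ → ℝ} (hσ : Continuous σ) (ℓ : X →L[ℝ] ℝ) (θ : ℝ) :
    (fun x => σ (ℓ x + θ)) ∈ (span ℝ (ridgeFunctions ψ)).uniformClosureOn K := by
  intro ε hε
  obtain ⟨R, hR⟩ := (hK.image (f := fun x => ℓ x + θ) (by fun_prop)).isBounded.subset_closedBall 0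
  obtain ⟨M, α, w, θ', hαwθ'⟩ := hTW σ hσ (-R) R ε hε
  refine ⟨∑ i, α i • fun x => ψ ((w i • ℓ) x + (w i * θ + θ' i)), ?_, fun x hx => ?_⟩
  · exact sum_mem fun i _ => smul_mem _ _ (subset_span ⟨_, _, rfl⟩)
  · have hxR : ℓ x + θ ∈ Set.Icc (-R) R := by
      simpa [abs_le] using hR ⟨x, hx, rfl⟩
    rw [norm_sub_rev, Real.norm_eq_abs]
    convert hαwθ' _ hxR using 4
    simp only [Finset.sum_apply, Pi.smul_apply, smul_eq_mul, smul_apply]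
    exact Finset.sum_congr rfl fun i _ => by ring_nf

theorem mem_uniformClosureOn_span_ridgeFunctions {ψ : ℝ → ℝ} (hTW : IsTauberWiener ψ)
    {K : Set X} (hK : IsCompact K) {g : X → ℝ} (hg : Continuous g) :
    g ∈ (span ℝ (ridgeFunctions ψ)).uniformClosureOn K := by
  refine uniformClosureOn_le_of_le (span_le.mpr ?_)
    (mem_uniformClosureOn_span_ridgeFunctions_exp hK hg)
  rintro _ ⟨ℓ, θ, rfl⟩
  exact comp_mem_uniformClosureOn_span_ridgeFunctions hTW hK Real.continuous_exp ℓ θ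

end RidgeFunctions

theorem EuclideanSpace.norm_le_card_mul {ι : Type*} [Fintype ι] {v : EuclideanSpace ℝ ι} {δ : ℝ}
    (hv : ∀ i, |v i| ≤ δ) :
    ‖v‖ ≤ Fintype.card ι * δ := by
  classical
  calc ‖v‖ = ‖∑ i, v i • EuclideanSpace.single i (1 : ℝ)‖ := by
        simpa using congrArg norm ((EuclideanSpace.basisFun ι ℝ).sum_repr v).symm
    _ ≤ ∑ i, ‖v i • EuclideanSpace.single i (1 : ℝ)‖ := norm_sum_le _ _
    _ ≤ ∑ _i : ι, δ := Finset.sum_le_sum fun i _ => by simpa [norm_smul] using hv i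
    _ = Fintype.card ι * δ := by simp

theorem exists_abs_apply_add_le_of_tendsto {ψ : ℝ → ℝ}
    (hlim : Tendsto ψ atBot (𝓝 0) ∨ Tendsto ψ atTop (𝓝 0)) {δ : ℝ} (hδ : 0 < δ) (C : ℝ) :
    ∃ T, ∀ t, |t| ≤ C → |ψ (t + T)| ≤ δ := by
  have hsmall : ∀ {l : Filter ℝ}, Tendsto ψ l (𝓝 0) → ∀ᶠ t in l, |ψ t| ≤ δ := fun h =>
    (h.eventually (Metric.closedBall_mem_nhds 0 hδ)).mono fun t ht => by simpa using ht
  rcases hlim with h | h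
  · obtain ⟨T, hT⟩ := eventually_atBot.mp (hsmall h)
    exact ⟨T - C, fun t ht => hT _ (by linarith [(abs_le.mp ht).2])⟩
  · obtain ⟨T, hT⟩ := eventually_atTop.mp (hsmall h)
    exact ⟨T + C, fun t ht => hT _ (by linarith [(abs_le.mp ht).1])⟩

section Hypercomplex

variable {ι J : Type*} [Fintype J]
  {μ : EuclideanSpace ℝ ι →ₗ[ℝ] EuclideanSpace ℝ ι →ₗ[ℝ] EuclideanSpace ℝ ι}

variable (μ) in
def neurons (Ψ : EuclideanSpace ℝ ι → EuclideanSpace ℝ ι) :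
    Set ((J → EuclideanSpace ℝ ι) → EuclideanSpace ℝ ι) :=
  {F | ∃ (α : EuclideanSpace ℝ ι) (w : J → EuclideanSpace ℝ ι) (b : EuclideanSpace ℝ ι),
    F = fun x => μ α (Ψ (∑ j, μ (w j) (x j) + b))}

theorem exists_eq_sum_of_mem_span_neurons {Ψ : EuclideanSpace ℝ ι → EuclideanSpace ℝ ι}
    {F : (J → EuclideanSpace ℝ ι) → EuclideanSpace ℝ ι} (hF : F ∈ span ℝ (neurons μ Ψ)) :
    ∃ (M : ℕ) (α : Fin M → EuclideanSpace ℝ ι) (w : Fin M → J → EuclideanSpace ℝ ι)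
      (b : Fin M → EuclideanSpace ℝ ι),
      F = fun x => ∑ i, μ (α i) (Ψ (∑ j, μ (w i j) (x j) + b i)) := by
  obtain ⟨M, c, G, rfl⟩ := mem_span_set'.mp hF
  choose α w b hG using fun i => (G i).2
  refine ⟨M, fun i => c i • α i, w, b, funext fun x => ?_⟩
  simp [Finset.sum_apply, hG]

variable [Fintype ι]

theorem exists_sum_mul_apply_eq {k : ι}
    (hμ : (μ.compr₂ (EuclideanSpace.projₗ k)).Nondegenerate)
    (ℓ : (J → EuclideanSpace ℝ ι) →L[ℝ] ℝ) :
    ∃ w : J → EuclideanSpace ℝ ι, ∀ x, (∑ j, μ (w j) (x j)) k = ℓ x := by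
  classical
  let B : LinearMap.BilinForm ℝ (EuclideanSpace ℝ ι) := μ.compr₂ (EuclideanSpace.projₗ k)
  let ℓⱼ (j : J) : Module.Dual ℝ (EuclideanSpace ℝ ι) :=
    (ℓ : (J → EuclideanSpace ℝ ι) →ₗ[ℝ] ℝ) ∘ₗ LinearMap.single ℝ (fun _ => EuclideanSpace ℝ ι) j
  refine ⟨fun j => (B.toDual hμ).symm (ℓⱼ j), fun x => ?_⟩
  calc (∑ j, μ _ (x j)) k = ∑ j, B ((B.toDual hμ).symm (ℓⱼ j)) (x j) :=
        map_sum (EuclideanSpace.projₗ k) _ _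
    _ = ∑ j, ℓ (Pi.single j (x j)) := by simp [ℓⱼ]
    _ = ℓ x := by rw [← map_sum, Finset.univ_sum_single]

variable [DecidableEq ι]

variable {ψ : ℝ → ℝ} {Ψ : EuclideanSpace ℝ ι → EuclideanSpace ℝ ι}
  {K : Set (J → EuclideanSpace ℝ ι)}

theorem ridge_smul_single_mem_uniformClosureOn_span_neurons {k : ι}
    (hμ : (μ.compr₂ (EuclideanSpace.projₗ k)).Nondegenerate) {one : EuclideanSpace ℝ ι}
    (hone : ∀ x, μ one x = x) (hlim : Tendsto ψ atBot (𝓝 0) ∨ Tendsto ψ atTop (𝓝 0))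
    (hΨ : ∀ x i, Ψ x i = ψ (x i)) (hK : IsCompact K) (ℓ : (J → EuclideanSpace ℝ ι) →L[ℝ] ℝ)
    (θ : ℝ) :
    (fun x => ψ (ℓ x + θ) • EuclideanSpace.single k (1 : ℝ)) ∈
      (span ℝ (neurons μ Ψ)).uniformClosureOn K := by
  intro ε hε
  obtain ⟨w, hw⟩ := exists_sum_mul_apply_eq hμ ℓ
  have hz : Continuous fun x : J → EuclideanSpace ℝ ι => ∑ j, μ (w j) (x j) :=
    continuous_finsetSum _ fun j _ =>
      (μ (w j)).continuous_of_finiteDimensional.comp (continuous_apply j)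
  obtain ⟨C, hC⟩ := (hK.image hz).isBounded.subset_closedBall 0
  set δ := ε / (Fintype.card ι + 1)
  obtain ⟨T, hT⟩ := exists_abs_apply_add_le_of_tendsto hlim (δ := δ) (by positivity) C
  let b : EuclideanSpace ℝ ι := WithLp.toLp 2 (Function.update (fun _ => T) k θ)
  refine ⟨fun x => μ one (Ψ (∑ j, μ (w j) (x j) + b)), subset_span ⟨one, w, b, rfl⟩,
    fun x hx => ?_⟩
  have hcoord : ∀ i, |(Ψ (∑ j, μ (w j) (x j) + b) - ψ (ℓ x + θ) • EuclideanSpace.single k (1 : ℝ) :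
      EuclideanSpace ℝ ι) i| ≤ δ := by
    intro i
    rcases eq_or_ne i k with rfl | hik
    · simp [hΨ, hw, b]
      positivity
    · have hzi : |(∑ j, μ (w j) (x j)) i| ≤ C :=
        (PiLp.norm_apply_le _ i).trans (by simpa using hC ⟨x, hx, rfl⟩)
      simpa [hΨ, hik, b] using hT _ hzi
  calc ‖μ one (Ψ (∑ j, μ (w j) (x j) + b)) - ψ (ℓ x + θ) • EuclideanSpace.single k 1‖
      ≤ Fintype.card ι * δ := by
        rw [hone]; exact EuclideanSpace.norm_le_card_mul hcoord
    _ ≤ ε := by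
        rw [mul_div_assoc', div_le_iff₀ (by positivity)]
        nlinarith

theorem smul_single_mem_uniformClosureOn_span_neurons {k : ι}
    (hμ : (μ.compr₂ (EuclideanSpace.projₗ k)).Nondegenerate) {one : EuclideanSpace ℝ ι}
    (hone : ∀ x, μ one x = x) (hTW : IsTauberWiener ψ)
    (hlim : Tendsto ψ atBot (𝓝 0) ∨ Tendsto ψ atTop (𝓝 0))
    (hΨ : ∀ x i, Ψ x i = ψ (x i)) (hK : IsCompact K) {g : (J → EuclideanSpace ℝ ι) → ℝ}
    (hg : Continuous g) :
    (fun x => g x • EuclideanSpace.single k (1 : ℝ)) ∈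
      (span ℝ (neurons μ Ψ)).uniformClosureOn K := by
  refine uniformClosureOn_le_of_le ?_ (comp_mem_uniformClosureOn_map
    (ContinuousLinearMap.toSpanSingleton ℝ (EuclideanSpace.single k 1))
    (mem_uniformClosureOn_span_ridgeFunctions hTW hK hg))
  rw [map_span_le]
  rintro _ ⟨ℓ, θ, rfl⟩
  exact ridge_smul_single_mem_uniformClosureOn_span_neurons hμ hone hlim hΨ hK ℓ θ

end Hypercomplex

theorem universal_approximation_hypercomplex_MLP_general
    (n N : ℕ)
    (μ : EuclideanSpace ℝ (Fin n) →ₗ[ℝ] EuclideanSpace ℝ (Fin n) →ₗ[ℝ] EuclideanSpace ℝ (Fin n))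
    (hnd : ∀ k : Fin n,
      (∀ y : EuclideanSpace ℝ (Fin n), (∀ x, μ x y k = 0) → y = 0) ∧
      (∀ x : EuclideanSpace ℝ (Fin n), (∀ y, μ x y k = 0) → x = 0))
    (one : EuclideanSpace ℝ (Fin n))
    (hone : ∀ x : EuclideanSpace ℝ (Fin n), μ one x = x ∧ μ x one = x)
    (ψ : ℝ → ℝ) (hTW : IsTauberWiener ψ)
    (hlim : Tendsto ψ atBot (nhds 0) ∨ Tendsto ψ atTop (nhds 0))
    (Ψ : EuclideanSpace ℝ (Fin n) → EuclideanSpace ℝ (Fin n))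
    (hΨ : ∀ (x : EuclideanSpace ℝ (Fin n)) (k : Fin n), Ψ x k = ψ (x k))
    (K : Set (Fin N → EuclideanSpace ℝ (Fin n))) (hK : IsCompact K)
    (f : (Fin N → EuclideanSpace ℝ (Fin n)) → EuclideanSpace ℝ (Fin n)) (hf : Continuous f)
    (ε : ℝ) (hε : 0 < ε) :
    ∃ M : ℕ, ∃ α : Fin M → EuclideanSpace ℝ (Fin n),
      ∃ w : Fin M → Fin N → EuclideanSpace ℝ (Fin n),
      ∃ b : Fin M → EuclideanSpace ℝ (Fin n),
        ∀ x ∈ K,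
          ‖(∑ i, μ (α i) (Ψ ((∑ j, μ (w i j) (x j)) + b i))) - f x‖ ≤ ε := by
  have hf_sum : f = ∑ k, fun x => f x k • EuclideanSpace.single k (1 : ℝ) := by
    ext x : 1
    simpa [Finset.sum_apply] using ((EuclideanSpace.basisFun (Fin n) ℝ).sum_repr (f x)).symm
  have hf_mem : f ∈ (span ℝ (neurons μ Ψ)).uniformClosureOn K := by
    rw [hf_sum]
    exact sum_mem fun k _ => smul_single_mem_uniformClosureOn_span_neurons
      ⟨(hnd k).2, (hnd k).1⟩ (fun x => (hone x).1) hTW hlim hΨ hK (by fun_prop)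
  obtain ⟨F, hF, hFf⟩ := hf_mem ε hε
  obtain ⟨M, α, w, b, rfl⟩ := exists_eq_sum_of_mem_span_neurons hF
  exact ⟨M, α, w, b, hFf⟩

/-- Universal approximation theorem for hypercomplex-valued MLP networks (with
vector-valued output weights), on a non-degenerate algebra with a two-sided identity. -/
theorem universal_approximation_hypercomplex_MLP
    (n N : ℕ) (hn : 1 ≤ n) (hN : 1 ≤ N)
    (μ : EuclideanSpace ℝ (Fin n) →ₗ[ℝ] EuclideanSpace ℝ (Fin n) →ₗ[ℝ] EuclideanSpace ℝ (Fin n))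
    (hnd : ∀ k : Fin n,
      (∀ y : EuclideanSpace ℝ (Fin n), (∀ x, μ x y k = 0) → y = 0) ∧
      (∀ x : EuclideanSpace ℝ (Fin n), (∀ y, μ x y k = 0) → x = 0))
    (one : EuclideanSpace ℝ (Fin n))
    (hone : ∀ x : EuclideanSpace ℝ (Fin n), μ one x = x ∧ μ x one = x)
    (ψ : ℝ → ℝ) (hTW : IsTauberWiener ψ)
    (hlim : Tendsto ψ atBot (nhds 0) ∨ Tendsto ψ atTop (nhds 0))
    (Ψ : EuclideanSpace ℝ (Fin n) → EuclideanSpace ℝ (Fin n))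
    (hΨ : ∀ (x : EuclideanSpace ℝ (Fin n)) (k : Fin n), Ψ x k = ψ (x k))
    (K : Set (Fin N → EuclideanSpace ℝ (Fin n))) (hK : IsCompact K)
    (f : (Fin N → EuclideanSpace ℝ (Fin n)) → EuclideanSpace ℝ (Fin n)) (hf : Continuous f)
    (ε : ℝ) (hε : 0 < ε) :
    ∃ M : ℕ, ∃ α : Fin M → EuclideanSpace ℝ (Fin n),
      ∃ w : Fin M → Fin N → EuclideanSpace ℝ (Fin n),
      ∃ b : Fin M → EuclideanSpace ℝ (Fin n),
        ∀ x ∈ K,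
          ‖(∑ i, μ (α i) (Ψ ((∑ j, μ (w i j) (x j)) + b i))) - f x‖ ≤ ε :=
  universal_approximation_hypercomplex_MLP_general n N μ hnd one hone ψ hTW hlim Ψ hΨ K hK f hf ε hε
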